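/- arXiv:1210.7128 — 2 statements merged into one kernel-verified Lean document; each statement's English description precedes it below -/
import Mathlib

section
/- Let r ≥ 2 and n = r + 1. Then H_S is invertible over ℚ and its r×r blocks are: (H_S⁻¹)_{αα} = 0 for all α; (H_S⁻¹)_{αβ} = ½·(S_r^(β−α+1) − S_r^(β−α)) for α > β; and (H_S⁻¹)_{αβ} = ½·(S_r^(β−α) − S_r^(β−α−1)) for α < β, where negative powers are defined by S_r^(−k) = (S_rᵗ)^k = (S_r⁻¹)^k. -/
/-!
Write `A = M_r + N_r`, the matrix of `sign (i - j)`, and `S` for the negacyclic shift `S_r`, a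
signed permutation matrix with `S⁻¹ = Sᵀ` and `S ^ r = -1`; the key identity is
`A (S - 1) = 1 + S`. Column `γ` of `2 H_S⁻¹` is the sequence of differences `h β - h (β + 1)`,
where `h β = S ^ (γ - β)` for `β ≤ γ` and `h β = S ^ (γ - β + 1)` for `β > γ`. Since
`h (r + 1) = -h 0`, multiplying it by block row `α` of `H_S` telescopes to
`h α + h (α + 1) - A (h α - h (α + 1))`; this is `2` for `α = γ`, where `h α = h (α + 1) = 1`,
and otherwise `(1 + S - A (S - 1)) S ^ k = 0`.
-/

open Matrix Finset

namespace Matrix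

section Blocks
variable {R : Type*} [Ring R]

variable (R) in
def frtBlocks (n : ℕ) (A : R) : Matrix (Fin n) (Fin n) R :=
  of fun α β => if α = β then -A else if α < β then 1 else -1

theorem frtBlocks_mulVec_sub_succ {n : ℕ} (A : R) (h : ℕ → R) (hn : h n = -h 0) (α : Fin n) :
    (frtBlocks R n A *ᵥ fun β => h β - h (β + 1)) α = h α + h (α + 1) - A * (h α - h (α + 1)) := by
  obtain ⟨a, ha⟩ := α
  have telescope : ∀ b c, b ≤ c → ∑ i ∈ Ico b c, (h i - h (i + 1)) = h b - h c := by
    intro b c hbc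
    rw [← neg_sub, ← sum_Ico_sub (f := h) hbc, ← sum_neg_distrib]
    simp only [neg_sub]
  let s : ℕ → R := fun b => if a = b then -A else if a < b then 1 else -1
  have hs_lo : ∀ b ∈ Ico 0 a, s b * (h b - h (b + 1)) = -(h b - h (b + 1)) := by
    intro b hb
    rw [mem_Ico] at hb
    simp [s, hb.2.ne', hb.2.not_gt]
  have hs_hi : ∀ b ∈ Ico (a + 1) n, s b * (h b - h (b + 1)) = h b - h (b + 1) := by
    intro b hb
    rw [mem_Ico] at hb
    simp [s, show a ≠ b by omega, show a < b by omega]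
  calc (frtBlocks R n A *ᵥ fun β => h β - h (β + 1)) ⟨a, ha⟩
      = ∑ b ∈ range n, s b * (h b - h (b + 1)) := by
        rw [← Fin.sum_univ_eq_sum_range (fun b => s b * (h b - h (b + 1)))]
        simp only [mulVec, dotProduct, frtBlocks, of_apply, s, Fin.ext_iff, Fin.lt_def]
    _ = -∑ b ∈ Ico 0 a, (h b - h (b + 1)) - A * (h a - h (a + 1))
          + ∑ b ∈ Ico (a + 1) n, (h b - h (b + 1)) := by
        rw [range_eq_Ico, ← sum_Ico_consecutive _ (Nat.zero_le a) ha.le,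
          sum_eq_sum_Ico_succ_bot ha, sum_congr rfl hs_lo, sum_congr rfl hs_hi, sum_neg_distrib]
        simp only [s, if_pos rfl, neg_mul]
        abel
    _ = h a + h (a + 1) - A * (h a - h (a + 1)) := by
        rw [telescope _ _ (Nat.zero_le _), telescope _ _ ha, hn]
        abel

def frtInvExponent (γ β : ℕ) : ℤ := if β ≤ γ then γ - β else γ - β + 1

variable (R) in
def frtInvBlocks (n : ℕ) (u : Rˣ) : Matrix (Fin n) (Fin n) R :=
  of fun β γ => ↑(u ^ frtInvExponent γ β) - ↑(u ^ frtInvExponent γ (β + 1))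

theorem frtBlocks_mul_frtInvBlocks {r : ℕ} (A : R) (u : Rˣ) (hA : A * (u - 1) = 1 + u)
    (hu : u ^ r = -1) : frtBlocks R (r + 1) A * frtInvBlocks R (r + 1) u = 2 := by
  ext α γ
  set h : ℕ → R := fun b => ↑(u ^ frtInvExponent γ b)
  have hn : h (r + 1) = -h 0 := by
    have : frtInvExponent γ (r + 1) = frtInvExponent γ 0 - r := by
      simp only [frtInvExponent]; split_ifs <;> omega
    simp only [h]
    rw [this, _root_.zpow_sub, zpow_natCast, hu, inv_neg_one, mul_neg_one, Units.val_neg]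
  calc (frtBlocks R (r + 1) A * frtInvBlocks R (r + 1) u) α γ
      = (frtBlocks R (r + 1) A *ᵥ fun β => h β - h (β + 1)) α := rfl
    _ = h α + h (α + 1) - A * (h α - h (α + 1)) := frtBlocks_mulVec_sub_succ A h hn α
    _ = (2 : Matrix (Fin (r + 1)) (Fin (r + 1)) R) α γ := ?_
  rw [ofNat_apply]
  split_ifs with hαγ
  · have h0 : frtInvExponent γ α = 0 ∧ frtInvExponent γ (α + 1) = 0 := by
      simp only [frtInvExponent, hαγ]; split_ifs <;> omega
    simp only [h, h0, zpow_zero, Units.val_one, sub_self, mul_zero, sub_zero]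
    norm_num
  · have hsucc : frtInvExponent γ α = 1 + frtInvExponent γ (α + 1) := by
      simp only [frtInvExponent]; split_ifs <;> omega
    simp only [h, hsucc, _root_.zpow_one_add, Units.val_mul]
    rw [← sub_one_mul, ← mul_assoc, hA, add_mul, one_mul, Nat.cast_zero]
    abel

theorem frtInvBlocks_apply_self {n : ℕ} (u : Rˣ) (α : Fin n) : frtInvBlocks R n u α α = 0 := by
  have h0 : frtInvExponent α α = frtInvExponent α (α + 1) := by
    simp only [frtInvExponent]; split_ifs <;> omega
  rw [frtInvBlocks, of_apply, h0, sub_self]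

theorem frtInvBlocks_apply_of_lt {n : ℕ} (u : Rˣ) {α β : Fin n} (hαβ : α < β) :
    frtInvBlocks R n u α β = ↑(u ^ (β - α : ℕ)) - ↑(u ^ (β - α - 1 : ℕ)) := by
  have h1 : frtInvExponent β α = (β - α : ℕ) := by
    simp only [frtInvExponent]; split_ifs <;> omega
  have h2 : frtInvExponent β (α + 1) = (β - α - 1 : ℕ) := by
    simp only [frtInvExponent]; split_ifs <;> omega
  rw [frtInvBlocks, of_apply, h1, h2, zpow_natCast, zpow_natCast]

theorem frtInvBlocks_apply_of_gt {n : ℕ} (u : Rˣ) {α β : Fin n} (hβα : β < α) :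
    frtInvBlocks R n u α β = ↑(u⁻¹ ^ (α - β - 1 : ℕ)) - ↑(u⁻¹ ^ (α - β : ℕ)) := by
  have h1 : frtInvExponent β α = -(α - β - 1 : ℕ) := by
    simp only [frtInvExponent]; split_ifs <;> omega
  have h2 : frtInvExponent β (α + 1) = -(α - β : ℕ) := by
    simp only [frtInvExponent]; split_ifs <;> omega
  rw [frtInvBlocks, of_apply, h1, h2, _root_.zpow_neg, _root_.zpow_neg, zpow_natCast,
    zpow_natCast, inv_pow, inv_pow]

end Blocks

section NegacyclicShift
variable {R : Type*} [CommRing R] {r : ℕ}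

variable (R) in
def negacyclicShift (r : ℕ) : Matrix (Fin r) (Fin r) R :=
  of fun i j => if (i : ℕ) + 1 = j then 1 else if (i : ℕ) = r - 1 ∧ (j : ℕ) = 0 then -1 else 0

theorem negacyclicShift_mul_apply (X : Matrix (Fin r) (Fin r) R) (i j : Fin r) :
    (negacyclicShift R r * X) i j =
      if h : (i : ℕ) + 1 < r then X ⟨i + 1, h⟩ j else -X ⟨0, i.pos⟩ j := by
  rw [mul_apply]
  split_ifs with h
  · refine (sum_eq_single ⟨i + 1, h⟩ (fun k _ hk => ?_) (by simp)).trans ?_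
    · simp only [negacyclicShift, of_apply, ne_eq, Fin.ext_iff] at hk ⊢
      split_ifs <;> first | omega | simp_all
    · simp [negacyclicShift]
  · refine (sum_eq_single ⟨0, i.pos⟩ (fun k _ hk => ?_) (by simp)).trans ?_
    · simp only [negacyclicShift, of_apply, ne_eq, Fin.ext_iff] at hk ⊢
      split_ifs <;> first | omega | simp_all
    · simp [negacyclicShift]
      omega

theorem mul_negacyclicShift_apply (X : Matrix (Fin r) (Fin r) R) (i j : Fin r) :
    (X * negacyclicShift R r) i j =
      if h : 0 < (j : ℕ) then X i ⟨j - 1, by omega⟩ else -X i ⟨r - 1, by omega⟩ := by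
  rw [mul_apply]
  split_ifs with h
  · refine (sum_eq_single ⟨j - 1, by omega⟩ (fun k _ hk => ?_) (by simp)).trans ?_
    · simp only [negacyclicShift, of_apply, ne_eq, Fin.ext_iff] at hk ⊢
      split_ifs <;> first | omega | simp_all
    · simp [negacyclicShift]
      omega
  · refine (sum_eq_single ⟨r - 1, by omega⟩ (fun k _ hk => ?_) (by simp)).trans ?_
    · simp only [negacyclicShift, of_apply, ne_eq, Fin.ext_iff] at hk ⊢
      split_ifs <;> first | omega | simp_all
    · simp only [negacyclicShift, of_apply]
      split_ifs <;> simp_all <;> omega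

theorem negacyclicShift_mul_transpose : negacyclicShift R r * (negacyclicShift R r)ᵀ = 1 := by
  ext i j
  rw [negacyclicShift_mul_apply, one_apply]
  simp only [transpose_apply, negacyclicShift, of_apply, Fin.ext_iff]
  split_ifs <;> simp_all <;> omega

theorem negacyclicShift_pow_apply {m : ℕ} (hm : m ≤ r) (i j : Fin r) :
    (negacyclicShift R r ^ m) i j =
      if (i : ℕ) + m = j then 1 else if (i : ℕ) + m = r + j then -1 else 0 := by
  induction m generalizing i with
  | zero =>
    rw [pow_zero, one_apply, if_neg (by omega : (i : ℕ) + 0 ≠ r + j)]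
    simp [Fin.ext_iff]
  | succ m ih =>
    rw [pow_succ', negacyclicShift_mul_apply]
    split_ifs <;> simp only [ih (by omega : m ≤ r)] <;> split_ifs <;> first | omega | simp_all

theorem negacyclicShift_pow_self : negacyclicShift R r ^ r = -1 := by
  ext i j
  rw [negacyclicShift_pow_apply le_rfl, neg_apply, one_apply]
  simp only [Fin.ext_iff]
  split_ifs <;> first | omega | simp_all

variable (R) in
@[simps]
def negacyclicShiftUnit (r : ℕ) : (Matrix (Fin r) (Fin r) R)ˣ where
  val := negacyclicShift R r
  inv := (negacyclicShift R r)ᵀ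
  val_inv := negacyclicShift_mul_transpose
  inv_val := mul_eq_one_comm.mp negacyclicShift_mul_transpose

theorem negacyclicShiftUnit_pow_self : negacyclicShiftUnit R r ^ r = -1 :=
  Units.ext (by rw [Units.val_pow_eq_pow_val, val_negacyclicShiftUnit, negacyclicShift_pow_self,
    Units.val_neg, Units.val_one])

variable (R) in
def signMatrix (r : ℕ) : Matrix (Fin r) (Fin r) R :=
  of fun i j => if j < i then 1 else if i < j then -1 else 0

theorem signMatrix_mul_negacyclicShift_sub_one (hr : 2 ≤ r) :
    signMatrix R r * (negacyclicShift R r - 1) = 1 + negacyclicShift R r := by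
  ext i j
  rw [mul_sub, mul_one, sub_apply, mul_negacyclicShift_apply, add_apply, one_apply]
  simp only [signMatrix, negacyclicShift, of_apply, Fin.ext_iff, Fin.lt_def]
  split_ifs <;> simp_all <;> omega

end NegacyclicShift

end Matrix

/-- for `n = r+1`, `H_S` is invertible and its `r×r` blocks are
`(H_S⁻¹)_{αα} = 0`, `(H_S⁻¹)_{αβ} = ½(S^(β-α+1) - S^(β-α))` for `α > β`, and
`(H_S⁻¹)_{αβ} = ½(S^(β-α) - S^(β-α-1))` for `α < β`, where negative powers are
`S^(-k) = (Sᵗ)^k` (for `α > β` the exponents `β-α+1 = -(α-β-1)` and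
`β-α = -(α-β)` are negative or zero). -/
theorem stmt_13 (r : ℕ) (hr : 2 ≤ r)
    (Nr Mr Sr : Matrix (Fin r) (Fin r) ℚ)
    (hNr : ∀ i j : Fin r, Nr i j = if i ≤ j then -1 else 0)
    (hMr : Mr = -Nrᵀ)
    (hSr : ∀ i j : Fin r, Sr i j =
      if (i : ℕ) + 1 = (j : ℕ) then 1
      else if (i : ℕ) = r - 1 ∧ (j : ℕ) = 0 then -1 else 0)
    (H : Matrix (Fin (r + 1) × Fin r) (Fin (r + 1) × Fin r) ℚ)
    (hH : ∀ (α β : Fin (r + 1)) (j k : Fin r), H (α, j) (β, k) =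
      if α = β then (-(Mr + Nr)) j k
      else if α < β then (1 : Matrix (Fin r) (Fin r) ℚ) j k
      else (-1 : Matrix (Fin r) (Fin r) ℚ) j k) :
    IsUnit H.det ∧
    (∀ (α : Fin (r + 1)) (j k : Fin r), H⁻¹ (α, j) (α, k) = 0) ∧
    (∀ (α β : Fin (r + 1)) (j k : Fin r), β < α →
      H⁻¹ (α, j) (β, k) =
        ((1 / 2 : ℚ) • ((Srᵀ) ^ ((α : ℕ) - (β : ℕ) - 1) - (Srᵀ) ^ ((α : ℕ) - (β : ℕ)))) j k) ∧
    (∀ (α β : Fin (r + 1)) (j k : Fin r), α < β →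
      H⁻¹ (α, j) (β, k) =
        ((1 / 2 : ℚ) • (Sr ^ ((β : ℕ) - (α : ℕ)) - Sr ^ ((β : ℕ) - (α : ℕ) - 1))) j k) := by
  obtain rfl : Sr = negacyclicShift ℚ r := ext hSr
  have hA : Mr + Nr = signMatrix ℚ r := by
    ext i j
    simp only [hMr, Matrix.add_apply, Matrix.neg_apply, transpose_apply, hNr, signMatrix, of_apply]
    split_ifs <;> first | omega | simp_all
  have hHb : H = comp _ _ _ _ _ (frtBlocks _ (r + 1) (Mr + Nr)) := by
    ext ⟨α, j⟩ ⟨β, k⟩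
    rw [hH, comp_apply, frtBlocks, of_apply]
    split_ifs <;> rfl
  set u := negacyclicShiftUnit ℚ r
  have hBlocks : frtBlocks _ (r + 1) (Mr + Nr) * frtInvBlocks _ (r + 1) u = 2 :=
    frtBlocks_mul_frtInvBlocks _ u (hA ▸ signMatrix_mul_negacyclicShift_sub_one hr)
      negacyclicShiftUnit_pow_self
  have hB : H * comp _ _ _ _ _ ((1 / 2 : ℚ) • frtInvBlocks _ (r + 1) u) = 1 := by
    rw [hHb, ← compRingEquiv_apply, ← compRingEquiv_apply, ← map_mul, Matrix.mul_smul, hBlocks,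
      ← one_add_one_eq_two (R := Matrix (Fin (r + 1)) (Fin (r + 1)) (Matrix (Fin r) (Fin r) ℚ)),
      ← two_smul ℚ, smul_smul, one_div, inv_mul_cancel₀ two_ne_zero, one_smul, map_one]
  have hinv := inv_eq_right_inv hB
  refine ⟨isUnit_det_of_right_inverse hB, fun α j k => ?_, fun α β j k hβα => ?_,
    fun α β j k hαβ => ?_⟩ <;> rw [hinv, comp_apply, Matrix.smul_apply]
  · rw [frtInvBlocks_apply_self, smul_zero, Matrix.zero_apply]
  · rw [frtInvBlocks_apply_of_gt u hβα, Units.val_pow_eq_pow_val, Units.val_pow_eq_pow_val]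
    rfl
  · rw [frtInvBlocks_apply_of_lt u hαβ, Units.val_pow_eq_pow_val, Units.val_pow_eq_pow_val]
    rfl
end

section
/- Let N ≥ 1 and 0 ≤ s ≤ N, and let H be an N×N skew-symmetric matrix over ℚ. Suppose K is an N×N matrix over ℚ such that K·H has the block form [[I_{N−s}, Y],[0, 0]] for some (N−s)×s matrix Y. Let a be an invertible (N−s)×(N−s) matrix, d an invertible s×s matrix, set b = −Y·d, and let T be the block upper triangular matrix [[a, b],[0, d]]. Define Λ = Tᵗ·H·T and let B be the N×(N−s) matrix consisting of the first N−s columns of 2·(T⁻¹·K·(Tᵗ)⁻¹)ᵗ. Then Λ·B equals the N×(N−s) matrix [[−2·I_{N−s}],[0]] (i.e., −2·I_{N−s} on top of the s×(N−s) zero matrix); in particular (Λ, B) is a compatible pair. -/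
open Matrix

/-- construction of a compatible pair `(Λ, B)`: with
`K·H = [[I, Y],[0, 0]]`, `T = [[a, b],[0, d]]` block upper triangular with `a, d`
invertible and `b = -Y·d`, `Λ = Tᵗ·H·T`, and `B` the first `N-s` columns of
`2·(T⁻¹·K·(Tᵗ)⁻¹)ᵗ`, one has `Λ·B = [[-2·I],[0]]`. -/
theorem stmt_18 (N s : ℕ) (hN : 1 ≤ N) (hsN : s ≤ N)
    (H K : Matrix (Fin (N - s) ⊕ Fin s) (Fin (N - s) ⊕ Fin s) ℚ)
    (hskew : Hᵀ = -H)
    (Y : Matrix (Fin (N - s)) (Fin s) ℚ)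
    (hKH : K * H = Matrix.fromBlocks 1 Y 0 0)
    (a : Matrix (Fin (N - s)) (Fin (N - s)) ℚ) (ha : IsUnit a.det)
    (d : Matrix (Fin s) (Fin s) ℚ) (hd : IsUnit d.det)
    (b : Matrix (Fin (N - s)) (Fin s) ℚ) (hb : b = -(Y * d))
    (T : Matrix (Fin (N - s) ⊕ Fin s) (Fin (N - s) ⊕ Fin s) ℚ)
    (hT : T = Matrix.fromBlocks a b 0 d)
    (Λ : Matrix (Fin (N - s) ⊕ Fin s) (Fin (N - s) ⊕ Fin s) ℚ)
    (hΛ : Λ = Tᵀ * H * T)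
    (B : Matrix (Fin (N - s) ⊕ Fin s) (Fin (N - s)) ℚ)
    (hB : ∀ (p : Fin (N - s) ⊕ Fin s) (j : Fin (N - s)),
      B p j = ((2 : ℚ) • (T⁻¹ * K * (Tᵀ)⁻¹)ᵀ) p (Sum.inl j)) :
    ∀ (p : Fin (N - s) ⊕ Fin s) (j : Fin (N - s)),
      (Λ * B) p j = if p = Sum.inl j then -2 else 0 := by
  have hdetT : IsUnit T.det := by
    rw [hT, Matrix.det_fromBlocks_zero₂₁]
    exact ha.mul hd
  have hTinv : T * T⁻¹ = 1 := Matrix.mul_nonsing_inv T hdetT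
  have hTTinv : Tᵀ * (Tᵀ)⁻¹ = 1 := by
    rw [← Matrix.transpose_nonsing_inv, ← Matrix.transpose_mul,
      Matrix.nonsing_inv_mul T hdetT, Matrix.transpose_one]
  have hHKt : H * Kᵀ = -(Matrix.fromBlocks 1 0 Yᵀ 0) := by
    have h := congrArg Matrix.transpose hKH
    simp only [Matrix.transpose_mul, hskew, Matrix.fromBlocks_transpose, Matrix.neg_mul,
      Matrix.transpose_zero, Matrix.transpose_one] at h
    rw [← h, neg_neg]
  have hleft : Tᵀ * Matrix.fromBlocks 1 0 Yᵀ 0 = Matrix.fromBlocks 1 0 0 0 * Tᵀ := by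
    rw [hT, hb, Matrix.fromBlocks_transpose, Matrix.fromBlocks_multiply,
      Matrix.fromBlocks_multiply]
    congr 1 <;> simp [Matrix.transpose_neg, Matrix.transpose_mul]
  set B' : Matrix (Fin (N - s) ⊕ Fin s) (Fin (N - s) ⊕ Fin s) ℚ :=
    (2 : ℚ) • (T⁻¹ * K * (Tᵀ)⁻¹)ᵀ with hB'
  have key : Λ * B' = (-2 : ℚ) • Matrix.fromBlocks 1 0 0 0 := by
    have h1 : (T⁻¹ * K * (Tᵀ)⁻¹)ᵀ = T⁻¹ * Kᵀ * (Tᵀ)⁻¹ := by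
      rw [Matrix.transpose_mul, Matrix.transpose_mul, ← Matrix.transpose_nonsing_inv,
        Matrix.transpose_transpose, Matrix.transpose_nonsing_inv, Matrix.mul_assoc]
    rw [hB', hΛ, Matrix.mul_smul, h1]
    have h2 : Tᵀ * H * T * (T⁻¹ * Kᵀ * (Tᵀ)⁻¹)
        = Tᵀ * (H * Kᵀ) * (Tᵀ)⁻¹ := by
      calc Tᵀ * H * T * (T⁻¹ * Kᵀ * (Tᵀ)⁻¹)
          = Tᵀ * H * (T * T⁻¹) * Kᵀ * (Tᵀ)⁻¹ := by
            simp only [Matrix.mul_assoc]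
        _ = Tᵀ * (H * Kᵀ) * (Tᵀ)⁻¹ := by
            rw [hTinv, Matrix.mul_one, Matrix.mul_assoc (Tᵀ) H Kᵀ]
    rw [h2, hHKt]
    have h3 : Tᵀ * -(Matrix.fromBlocks 1 0 Yᵀ 0) * (Tᵀ)⁻¹
        = -(Matrix.fromBlocks 1 0 0 0 * (Tᵀ * (Tᵀ)⁻¹)) := by
      rw [Matrix.mul_neg, hleft, Matrix.neg_mul, Matrix.mul_assoc]
    rw [h3, hTTinv, Matrix.mul_one, smul_neg, ← neg_smul]
  intro p j
  have hcol : (Λ * B) p j = (Λ * B') p (Sum.inl j) := by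
    simp only [Matrix.mul_apply, hB]
  rw [hcol, key]
  cases p with
  | inl i =>
    by_cases hij : i = j <;>
      simp [Matrix.fromBlocks, Matrix.one_apply, hij]
  | inr i =>
    simp [Matrix.fromBlocks]
end
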